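/- Let g_x, g_p be positive integers, d ≥ 1 an integer, h_x, h_p > 0, and m ≥ m_min > 0 real numbers, and set p_max := g_p·h_p. Let D be the discrete derivative operator of order 2d with periodic boundary conditions on ℂ^{ℤ/g_xℤ} with grid spacing h_x, and let M be the g_p×g_p diagonal matrix with entries M_{p̂,p̂} = (p̂·h_p)/m for p̂ ∈ {0,…,g_p−1}. Then ‖D ⊗ M‖ ≤ (p_max/m_min) · 2·(ln d + 1)/h_x. -/

import Mathlib

open scoped Matrix.Norms.L2Operator Kronecker

/-- The central finite-difference coefficients `c_{d,k}` of order `2d`: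
`c_{d,k} = (-1)^(k+1) · (d!)² / (k·(d-k)!·(d+k)!)` for `k ≠ 0`, and `c_{d,0} = 0`. -/
noncomputable def centralFDCoeff (d : ℕ) (k : ℤ) : ℝ :=
  if k = 0 then 0
  else (-1 : ℝ) ^ (k + 1) * ((d.factorial : ℝ)) ^ 2 /
    ((k : ℝ) * (((d : ℤ) - k).toNat.factorial : ℝ) * (((d : ℤ) + k).toNat.factorial : ℝ))

/-- The discrete derivative operator of order `2d` with periodic boundary conditions on
`ℂ^{ℤ/gℤ}` with grid spacing `h`:  `D = (1/h)·Σ_x Σ_{k=-d}^{d} c_{d,k}·E_{x-k,x}`. -/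
noncomputable def discreteDeriv (g : ℕ) [NeZero g] (h : ℝ) (d : ℕ) :
    Matrix (ZMod g) (ZMod g) ℂ :=
  ((1 / h : ℝ) : ℂ) •
    ∑ x : ZMod g, ∑ k ∈ Finset.Icc (-(d : ℤ)) (d : ℤ),
      ((centralFDCoeff d k : ℝ) : ℂ) • Matrix.single (x - (k : ZMod g)) x (1 : ℂ)

/-! The derivative matrix is `(1/h) Σ_k c_{d,k} P_k` with `P_k` the cyclic shift by `k`, and
`P_k ⊗ M` is a permutation matrix times a diagonal matrix, so
`‖P_k ⊗ M‖ ≤ max |M_pp| ≤ p_max/m_min`.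
Since the central binomial coefficient `C(2d, d)` is the largest, `(d!)² ≤ (d-k)!(d+k)!`, whence
`|c_{d,k}| ≤ 1/|k|`; summing over `0 < |k| ≤ d` gives `2 H_d ≤ 2 (ln d + 1)`. -/

open Matrix Finset
open scoped Nat

theorem sum_kronecker {ι l m n p α : Type*} [NonUnitalNonAssocSemiring α] (s : Finset ι)
    (A : ι → Matrix l m α) (B : Matrix n p α) :
    (∑ i ∈ s, A i) ⊗ₖ B = ∑ i ∈ s, A i ⊗ₖ B := by
  ext ⟨i, k⟩ ⟨j, q⟩
  simp only [kronecker_apply, Matrix.sum_apply, Finset.sum_mul]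

theorem permMatrix_kronecker_diagonal {m n R : Type*} [DecidableEq m] [DecidableEq n]
    [Fintype m] [Fintype n] [NonAssocSemiring R] (σ : Equiv.Perm m) (v : n → R) :
    σ.permMatrix R ⊗ₖ diagonal v
      = Equiv.Perm.permMatrix R (σ.prodCongr (Equiv.refl n)) * diagonal (fun i => v i.2) := by
  ext ⟨i, p⟩ ⟨j, q⟩
  rcases eq_or_ne p q with rfl | hpq <;> simp [PEquiv.toMatrix_apply, *]

theorem norm_permMatrix_kronecker_diagonal_le {m n 𝕜 : Type*} [DecidableEq m] [DecidableEq n]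
    [Fintype m] [Fintype n] [RCLike 𝕜] (σ : Equiv.Perm m) (v : n → 𝕜) :
    ‖σ.permMatrix 𝕜 ⊗ₖ diagonal v‖ ≤ ‖v‖ := by
  rw [permMatrix_kronecker_diagonal]
  calc _ ≤ ‖Equiv.Perm.permMatrix 𝕜 (σ.prodCongr (Equiv.refl n))‖ *
        ‖diagonal (fun i : m × n => v i.2)‖ := l2_opNorm_mul _ _
    _ ≤ 1 * ‖v‖ := by
        gcongr
        · exact permMatrix_l2_opNorm_le _
        · rw [l2_opNorm_diagonal]
          exact pi_norm_le_iff_of_nonneg (norm_nonneg v) |>.2 fun i => norm_le_pi_norm v i.2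
    _ = ‖v‖ := one_mul _

theorem sum_single_sub_eq_permMatrix {G R : Type*} [AddGroup G] [Fintype G] [DecidableEq G]
    [NonAssocSemiring R] (a : G) :
    ∑ x : G, single (x - a) x (1 : R) = (Equiv.addRight a).permMatrix R := by
  ext i j
  rw [Matrix.sum_apply, Finset.sum_eq_single j]
  · simp [single_apply, PEquiv.toMatrix_apply, eq_sub_iff_add_eq, eq_comm]
  · intro x _ hx
    simp [hx]
  · simp

theorem factorial_mul_factorial_le_factorial_sub_mul_factorial_add {d j : ℕ} (hj : j ≤ d) :
    d ! * d ! ≤ (d - j)! * (d + j)! := by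
  have hmid := Nat.choose_le_middle (d - j) (2 * d)
  have hcentral := Nat.choose_mul_factorial_mul_factorial (show d ≤ 2 * d by omega)
  have hside := Nat.choose_mul_factorial_mul_factorial (show d - j ≤ 2 * d by omega)
  rw [show 2 * d - d = d by omega] at hcentral
  rw [show 2 * d - (d - j) = d + j by omega] at hside
  rw [show 2 * d / 2 = d by omega] at hmid
  refine Nat.le_of_mul_le_mul_left ?_ (Nat.choose_pos (show d ≤ 2 * d by omega))
  calc (2 * d).choose d * (d ! * d !) = (2 * d).choose (d - j) * ((d - j)! * (d + j)!) := by
        rw [← mul_assoc, hcentral, ← mul_assoc, hside]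
    _ ≤ (2 * d).choose d * ((d - j)! * (d + j)!) := Nat.mul_le_mul_right _ hmid

theorem abs_centralFDCoeff_le {d : ℕ} {k : ℤ} (hk : k ∈ Icc (-(d : ℤ)) d) :
    |centralFDCoeff d k| ≤ |(k : ℝ)|⁻¹ := by
  rw [Finset.mem_Icc] at hk
  rcases eq_or_ne k 0 with rfl | hk0
  · simp [centralFDCoeff]
  have hfact : d ! * d ! ≤ ((d - k).toNat)! * ((d + k).toNat)! := by
    rcases le_or_gt 0 k with hk_nonneg | hk_neg
    · rw [show (d - k).toNat = d - k.toNat by omega, show (d + k).toNat = d + k.toNat by omega]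
      exact factorial_mul_factorial_le_factorial_sub_mul_factorial_add (by omega)
    · rw [show (d - k).toNat = d + (-k).toNat by omega,
        show (d + k).toNat = d - (-k).toNat by omega, Nat.mul_comm (d + _)!]
      exact factorial_mul_factorial_le_factorial_sub_mul_factorial_add (by omega)
  have hk' : (0 : ℝ) < |(k : ℝ)| := by positivity
  rw [centralFDCoeff, if_neg hk0, abs_div, abs_mul, abs_zpow, abs_neg, abs_one,
    _root_.one_zpow, one_mul, abs_mul, abs_mul, abs_of_nonneg (by positivity), Nat.abs_cast,
    Nat.abs_cast, mul_assoc, div_le_iff₀ (by positivity), inv_mul_cancel_left₀ hk'.ne', sq]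
  exact_mod_cast hfact

/-- The `k = 0` term is `|0|⁻¹ = 0`. -/
theorem sum_Icc_neg_abs_inv (d : ℕ) :
    ∑ k ∈ Icc (-(d : ℤ)) d, |(k : ℝ)|⁻¹ = 2 * harmonic d := by
  induction d with
  | zero => simp
  | succ n ih =>
    have hIcc : Icc (-((n + 1 : ℕ) : ℤ)) ((n + 1 : ℕ) : ℤ)
        = insert (-(n + 1 : ℤ)) (insert (n + 1 : ℤ) (Icc (-(n : ℤ)) n)) := by
      ext k; simp only [Finset.mem_Icc, Finset.mem_insert]; omega
    rw [hIcc, sum_insert (by simp only [Finset.mem_insert, Finset.mem_Icc]; omega),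
      sum_insert (by simp only [Finset.mem_Icc]; omega), ih, harmonic_succ]
    push_cast
    rw [abs_neg, abs_of_pos (by positivity)]
    ring

theorem sum_Icc_neg_abs_inv_le (d : ℕ) :
    ∑ k ∈ Icc (-(d : ℤ)) d, |(k : ℝ)|⁻¹ ≤ 2 * (Real.log d + 1) := by
  rw [sum_Icc_neg_abs_inv]
  linarith [harmonic_le_one_add_log d]

theorem discreteDeriv_eq_sum_permMatrix (g : ℕ) [NeZero g] (h : ℝ) (d : ℕ) :
    discreteDeriv g h d = ((1 / h : ℝ) : ℂ) • ∑ k ∈ Icc (-(d : ℤ)) d,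
      ((centralFDCoeff d k : ℝ) : ℂ) • (Equiv.addRight (k : ZMod g)).permMatrix ℂ := by
  rw [discreteDeriv, Finset.sum_comm]
  simp_rw [← Finset.smul_sum, sum_single_sub_eq_permMatrix]

theorem norm_discreteDeriv_kronecker_diagonal_le {n : Type*} [Fintype n] [DecidableEq n]
    (g : ℕ) [NeZero g] {h : ℝ} (hh : 0 < h) (d : ℕ) (v : n → ℂ) :
    ‖discreteDeriv g h d ⊗ₖ diagonal v‖ ≤ 2 * (Real.log d + 1) / h * ‖v‖ := by
  rw [discreteDeriv_eq_sum_permMatrix, smul_kronecker, sum_kronecker, norm_smul,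
    Complex.norm_real, Real.norm_of_nonneg (by positivity), one_div_mul_eq_div,
    div_mul_eq_mul_div]
  gcongr
  calc _ ≤ ∑ k ∈ Icc (-(d : ℤ)) d, |centralFDCoeff d k| * ‖v‖ := by
        refine norm_sum_le_of_le _ fun k _ => ?_
        rw [smul_kronecker, norm_smul, Complex.norm_real, Real.norm_eq_abs]
        gcongr
        exact norm_permMatrix_kronecker_diagonal_le _ v
    _ ≤ ∑ k ∈ Icc (-(d : ℤ)) d, |(k : ℝ)|⁻¹ * ‖v‖ := by
        gcongr with k hk
        exact abs_centralFDCoeff_le hk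
    _ ≤ 2 * (Real.log d + 1) * ‖v‖ := by
        rw [← Finset.sum_mul]
        gcongr
        exact sum_Icc_neg_abs_inv_le d

theorem kinetic_NVE_norm_le_general (gx gp : ℕ) [NeZero gx]
    (d : ℕ) (hx hp : ℝ) (hhx : 0 < hx) (hhp : 0 < hp)
    (m mmin : ℝ) (hm : mmin ≤ m) (hmmin : 0 < mmin) :
    ‖discreteDeriv gx hx d ⊗ₖ
        Matrix.diagonal (fun phat : Fin gp => (((phat : ℕ) * hp / m : ℝ) : ℂ))‖ ≤
      (gp * hp / mmin) * (2 * (Real.log d + 1) / hx) := by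
  have hm0 : 0 < m := hmmin.trans_le hm
  have hmomentum :
      ‖fun phat : Fin gp => (((phat : ℕ) * hp / m : ℝ) : ℂ)‖ ≤ gp * hp / mmin := by
    refine pi_norm_le_iff_of_nonneg (by positivity) |>.2 fun phat => ?_
    rw [Complex.norm_real, Real.norm_of_nonneg (by positivity)]
    gcongr
    exact_mod_cast phat.is_lt.le
  calc _ ≤ 2 * (Real.log d + 1) / hx * (gp * hp / mmin) :=
        (norm_discreteDeriv_kronecker_diagonal_le gx hhx d _).trans (by gcongr)
    _ = _ := mul_comm _ _

/-- **Spectral norm bound on the NVE kinetic Liouvillian term** `K^{(NVE)}_{n,j} = D ⊗ M`,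
with `M` the diagonal momentum matrix `phat·h_p/m`:
`‖D ⊗ M‖ ≤ (p_max/m_min)·2·(ln d + 1)/h_x` where `p_max = g_p·h_p`. -/
theorem kinetic_NVE_norm_le (gx gp : ℕ) [NeZero gx] (hgp : 0 < gp)
    (d : ℕ) (hd : 1 ≤ d) (hx hp : ℝ) (hhx : 0 < hx) (hhp : 0 < hp)
    (m mmin : ℝ) (hm : mmin ≤ m) (hmmin : 0 < mmin) :
    ‖discreteDeriv gx hx d ⊗ₖ
        Matrix.diagonal (fun phat : Fin gp => (((phat : ℕ) * hp / m : ℝ) : ℂ))‖ ≤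
      (gp * hp / mmin) * (2 * (Real.log d + 1) / hx) :=
  kinetic_NVE_norm_le_general gx gp d hx hp hhx hhp m mmin hm hmmin
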